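/- arXiv:1406.6426 — 3 statements merged into one kernel-verified Lean document; each statement's English description precedes it below -/
import Mathlib

section
/- If A is a graded algebra with straightening law on a poset P over B, and I, J ⊆ P are order ideals, then the ring ideal generated by I intersected with the ring ideal generated by J equals the ring ideal generated by I ∩ J. -/
/-- A graded algebra with straightening law (ASL) on a poset `ι` over `B`.
`𝒜` is the grading, `emb : ι → A` realizes the poset as elements of `A`. -/
structure ASL (B : Type*) [CommRing B] (A : Type*) [CommRing A] [Algebra B A]
    (ι : Type*) [PartialOrder ι] (𝒜 : ℕ → Submodule B A) [GradedAlgebra 𝒜] where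
  /-- `A_0 = B` (the degree-zero part is the image of `B`). -/
  zero_eq : 𝒜 0 = 1
  /-- The elements of the poset inside `A`. -/
  emb : ι → A
  /-- Each poset element is homogeneous of positive degree. -/
  homog : ∀ x : ι, ∃ d, 0 < d ∧ emb x ∈ 𝒜 d
  /-- The poset generates `A` as a `B`-algebra. -/
  generates : Algebra.adjoin B (Set.range emb) = ⊤
  /-- The standard monomials (products over weakly increasing chains) form a
  free `B`-module basis of `A`. -/
  bas : Module.Basis {l : List ι // l.Chain' (· ≤ ·)} B A
  bas_eq : ∀ l : {l : List ι // l.Chain' (· ≤ ·)}, bas l = (l.1.map emb).prod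
  /-- Straightening relations: for incomparable `ξ, ν`, every standard monomial
  appearing in `ξν` has a factor `ζ ≤ ξ, ζ ≤ ν`. -/
  straighten : ∀ ξ ν : ι, ¬ ξ ≤ ν → ¬ ν ≤ ξ →
    ∀ l : {l : List ι // l.Chain' (· ≤ ·)}, bas.repr (emb ξ * emb ν) l ≠ 0 →
      ∃ ζ ∈ l.1, ζ ≤ ξ ∧ ζ ≤ ν

/-!
Write `M S` for the `B`-span of the standard monomials having a factor in `S`. A standard
monomial is a chain, so if it has a factor in `I` and one in `J`, the smaller of the two lies in
`I ∩ J`; reading coefficients in the standard basis gives `M I ⊓ M J = M (I ∩ J)`. It remains to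
see that `M I` is the ideal generated by `I` when `I` is an order ideal, i.e. that `ν * x` lies in
`M {η | η ≤ ν}` for all `x`. This is proved by well-founded induction on `ν`, on a standard
monomial `x = ξ * x'`: if `ν ≤ ξ` then `ν * x` is standard, and otherwise `ξ * ν` lies in
`M {ζ | ζ < ν}` (it is standard if `ξ < ν`, and straightened if they are incomparable), to which
the induction hypothesis applies.
-/

theorem List.Chain'.le_total_of_mem {α : Type*} [Preorder α] {l : List α}
    (hl : l.Chain' (· ≤ ·)) {a b : α} (ha : a ∈ l) (hb : b ∈ l) : a ≤ b ∨ b ≤ a := by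
  rcases eq_or_ne a b with rfl | hne
  · exact Or.inl le_rfl
  · have : Std.Symm fun x y : α => x ≤ y ∨ y ≤ x := ⟨fun _ _ h => h.symm⟩
    exact List.Pairwise.forall (R := fun x y : α => x ≤ y ∨ y ≤ x)
      ((List.isChain_iff_pairwise.mp hl).imp Or.inl) ha hb hne

namespace ASL

variable {B A ι : Type*} [CommRing B] [CommRing A] [Algebra B A] [PartialOrder ι]
  {𝒜 : ℕ → Submodule B A} [GradedAlgebra 𝒜] (asl : ASL B A ι 𝒜)

def monomialSpan (S : Set ι) : Submodule B A :=
  Submodule.span B (asl.bas '' {l | ∃ ζ ∈ l.1, ζ ∈ S})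

lemma mem_monomialSpan_iff {S : Set ι} {x : A} :
    x ∈ asl.monomialSpan S ↔ ∀ l, asl.bas.repr x l ≠ 0 → ∃ ζ ∈ l.1, ζ ∈ S := by
  simp only [monomialSpan, Module.Basis.mem_span_image, Set.subset_def, Finset.mem_coe,
    Finsupp.mem_support_iff, Set.mem_setOf_eq]

lemma monomialSpan_mono {S S' : Set ι} (h : S ⊆ S') : asl.monomialSpan S ≤ asl.monomialSpan S' :=
  Submodule.span_mono <| Set.image_mono fun _ ⟨ζ, hζl, hζS⟩ => ⟨ζ, hζl, h hζS⟩

lemma bas_mem_monomialSpan {S : Set ι} {l : {l : List ι // l.Chain' (· ≤ ·)}} {ζ : ι}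
    (hζl : ζ ∈ l.1) (hζS : ζ ∈ S) : asl.bas l ∈ asl.monomialSpan S :=
  Submodule.subset_span ⟨l, ⟨ζ, hζl, hζS⟩, rfl⟩

lemma bas_cons {ξ : ι} {l : List ι} (h : (ξ :: l).Chain' (· ≤ ·)) :
    asl.bas ⟨ξ :: l, h⟩ = asl.emb ξ * asl.bas ⟨l, h.tail⟩ := by
  simp only [bas_eq, List.map_cons, List.prod_cons]

lemma bas_nil (h : ([] : List ι).Chain' (· ≤ ·)) : asl.bas ⟨[], h⟩ = 1 := by
  simp only [bas_eq, List.map_nil, List.prod_nil]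

lemma bas_singleton (ξ : ι) : asl.bas ⟨[ξ], List.isChain_singleton ξ⟩ = asl.emb ξ := by
  simp only [bas_eq, List.map_cons, List.map_nil, List.prod_cons, List.prod_nil, mul_one]

lemma exists_bas_eq_emb_mul {l : {l : List ι // l.Chain' (· ≤ ·)}} {ζ : ι} (hζ : ζ ∈ l.1) :
    ∃ w : A, asl.bas l = asl.emb ζ * w := by
  classical
  exact ⟨((l.1.map asl.emb).erase (asl.emb ζ)).prod, by
    rw [asl.bas_eq, ← List.prod_erase (List.mem_map_of_mem hζ)]⟩

lemma mul_mem_of_forall_emb_mul_mem {S : Set ι} {N : Submodule B A}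
    (hS : ∀ ζ ∈ S, ∀ x, asl.emb ζ * x ∈ N) {y : A} (hy : y ∈ asl.monomialSpan S) (x : A) :
    y * x ∈ N := by
  induction hy using Submodule.span_induction with
  | mem _ h =>
    obtain ⟨l, ⟨ζ, hζl, hζS⟩, rfl⟩ := h
    obtain ⟨w, hw⟩ := asl.exists_bas_eq_emb_mul hζl
    rw [hw, mul_assoc]
    exact hS ζ hζS _
  | zero => simpa only [zero_mul] using N.zero_mem
  | add _ _ _ _ hy hz => simpa only [add_mul] using N.add_mem hy hz
  | smul b _ _ hy => simpa only [smul_mul_assoc] using N.smul_mem b hy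

lemma emb_mul_emb_mem_of_not_le {ξ ν : ι} (hνξ : ¬ ν ≤ ξ) :
    asl.emb ξ * asl.emb ν ∈ asl.monomialSpan {ζ | ζ < ν} := by
  by_cases hξν : ξ ≤ ν
  · have hc : [ξ, ν].Chain' (· ≤ ·) := List.isChain_pair.mpr hξν
    have h := asl.bas_mem_monomialSpan (l := ⟨_, hc⟩) (S := {ζ | ζ < ν}) List.mem_cons_self
      (lt_of_le_not_ge hξν hνξ)
    rwa [bas_cons, bas_singleton] at h
  · rw [mem_monomialSpan_iff]
    intro l hl
    obtain ⟨ζ, hζl, hζξ, hζν⟩ := asl.straighten ξ ν hξν hνξ l hl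
    exact ⟨ζ, hζl, lt_of_le_of_ne hζν fun h => hνξ (h ▸ hζξ)⟩

lemma emb_mul_bas_mem_of_forall_lt {ν : ι}
    (ih : ∀ ζ < ν, ∀ x, asl.emb ζ * x ∈ asl.monomialSpan {η | η ≤ ζ})
    (l : {l : List ι // l.Chain' (· ≤ ·)}) :
    asl.emb ν * asl.bas l ∈ asl.monomialSpan {η | η ≤ ν} := by
  obtain ⟨l, hl⟩ := l
  cases l with
  | nil =>
    rw [bas_nil, mul_one, ← bas_singleton]
    exact asl.bas_mem_monomialSpan List.mem_cons_self le_rfl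
  | cons ξ l =>
    by_cases hνξ : ν ≤ ξ
    · have hc : (ν :: ξ :: l).Chain' (· ≤ ·) := List.isChain_cons_cons.mpr ⟨hνξ, hl⟩
      have h := asl.bas_mem_monomialSpan (l := ⟨_, hc⟩) (S := {η | η ≤ ν}) List.mem_cons_self
        le_rfl
      rwa [bas_cons] at h
    · rw [bas_cons, ← mul_assoc, mul_comm (asl.emb ν)]
      refine asl.mul_mem_of_forall_emb_mul_mem (fun ζ hζ x => ?_)
        (asl.emb_mul_emb_mem_of_not_le hνξ) _
      exact asl.monomialSpan_mono (fun _ hη => hη.trans hζ.le) (ih ζ hζ x)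

lemma emb_mul_mem_monomialSpan [WellFoundedLT ι] (ν : ι) (x : A) :
    asl.emb ν * x ∈ asl.monomialSpan {η | η ≤ ν} := by
  induction ν using WellFoundedLT.induction generalizing x with
  | _ ν ih =>
  have hspan : Submodule.span B (Set.range asl.bas) ≤
      (asl.monomialSpan {η | η ≤ ν}).comap (LinearMap.mulLeft B (asl.emb ν)) :=
    Submodule.span_le.mpr <| Set.range_subset_iff.mpr <| asl.emb_mul_bas_mem_of_forall_lt ih
  exact hspan (asl.bas.span_eq ▸ Submodule.mem_top)

lemma mul_mem_monomialSpan [WellFoundedLT ι] {I : Set ι} (hI : IsLowerSet I) (a : A) {y : A}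
    (hy : y ∈ asl.monomialSpan I) : a * y ∈ asl.monomialSpan I := by
  rw [mul_comm]
  refine asl.mul_mem_of_forall_emb_mul_mem (fun ζ hζ x => ?_) hy a
  exact asl.monomialSpan_mono (fun _ hη => hI hη hζ) (asl.emb_mul_mem_monomialSpan ζ x)

lemma restrictScalars_span_emb [WellFoundedLT ι] {I : Set ι} (hI : IsLowerSet I) :
    (Ideal.span (asl.emb '' I)).restrictScalars B = asl.monomialSpan I := by
  refine le_antisymm (fun x hx => ?_) (Submodule.span_le.mpr ?_)
  · induction hx using Submodule.span_induction with
    | mem _ h =>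
      obtain ⟨ζ, hζ, rfl⟩ := h
      simpa only [bas_singleton] using
        asl.bas_mem_monomialSpan (l := ⟨[ζ], List.isChain_singleton ζ⟩) List.mem_cons_self hζ
    | zero => exact Submodule.zero_mem _
    | add _ _ _ _ hx hy => exact Submodule.add_mem _ hx hy
    | smul a _ _ hx => exact asl.mul_mem_monomialSpan hI a hx
  · rintro _ ⟨l, ⟨ζ, hζl, hζI⟩, rfl⟩
    obtain ⟨w, hw⟩ := asl.exists_bas_eq_emb_mul hζl
    rw [hw]
    exact Ideal.mul_mem_right w _ (Ideal.subset_span ⟨ζ, hζI, rfl⟩)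

lemma monomialSpan_inf {I J : Set ι} (hI : IsLowerSet I) (hJ : IsLowerSet J) :
    asl.monomialSpan I ⊓ asl.monomialSpan J = asl.monomialSpan (I ∩ J) := by
  refine le_antisymm (fun x ⟨hxI, hxJ⟩ => ?_)
    (le_inf (asl.monomialSpan_mono Set.inter_subset_left)
      (asl.monomialSpan_mono Set.inter_subset_right))
  rw [SetLike.mem_coe, mem_monomialSpan_iff] at hxI hxJ
  rw [mem_monomialSpan_iff]
  intro l hl
  obtain ⟨ζ, hζl, hζI⟩ := hxI l hl
  obtain ⟨η, hηl, hηJ⟩ := hxJ l hl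
  rcases l.2.le_total_of_mem hζl hηl with h | h
  · exact ⟨ζ, hζl, hζI, hJ h hηJ⟩
  · exact ⟨η, hηl, hI h hζI, hηJ⟩

end ASL

theorem stmt_3 {B A ι : Type*} [CommRing B] [CommRing A] [Algebra B A]
    [PartialOrder ι] [Fintype ι] (𝒜 : ℕ → Submodule B A) [GradedAlgebra 𝒜]
    (asl : ASL B A ι 𝒜) (I J : Set ι) (hI : IsLowerSet I) (hJ : IsLowerSet J) :
    Ideal.span (asl.emb '' I) ⊓ Ideal.span (asl.emb '' J) =
      Ideal.span (asl.emb '' (I ∩ J)) := by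
  apply Submodule.restrictScalars_injective B
  rw [Submodule.restrictScalars_inf, asl.restrictScalars_span_emb hI,
    asl.restrictScalars_span_emb hJ, asl.restrictScalars_span_emb (hI.inter hJ),
    asl.monomialSpan_inf hI hJ]
end

section
/- Let A be a graded doset algebra with straightening law on a doset D over B and let I ⊆ D be a doset order ideal. Then the ring ideal AI is spanned over B by the standard monomials (β_1,β_2)⋯(β_{2ℓ−1},β_{2ℓ}) whose first factor (β_1,β_2) lies in I. -/
/-!
If a product `M` of doset elements contains a factor `p ∈ I`, then `M` is homogeneous of positive
degree, so every standard monomial `N` in its standard representation is non-empty, and by the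
lexicographic condition (applied to a rearrangement of `M` starting with `p`) the first factor
`q` of `N` satisfies `q.1 ≤ p.1`; hence `q ∈ I`. Since the standard monomials span `A`, the
`B`-span of the standard monomials with first factor in `I` is therefore closed under
multiplication by `A`, i.e. it is an ideal, and it clearly lies between `emb '' I` and `AI`.
-/

/-- Flatten a list of pairs `(α_1,α_2)(α_3,α_4)⋯` into the list `α_1,α_2,α_3,…`. -/
def flat {ι : Type*} (l : List (ι × ι)) : List ι := l.flatMap fun p => [p.1, p.2]

/-- Lexicographic `≤` on sequences of poset elements. -/
def lexLE {ι : Type*} [PartialOrder ι] (a b : List ι) : Prop :=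
  a = b ∨ List.Lex (· < ·) a b

/-- The index type of standard monomials of a doset `D`: lists of pairs from `D`
whose flattened sequence is weakly increasing. -/
def Std {ι : Type*} [PartialOrder ι] (D : Set (ι × ι)) : Type _ :=
  {l : List (ι × ι) // (∀ p ∈ l, p ∈ D) ∧ (flat l).Chain' (· ≤ ·)}

/-- A graded doset algebra with straightening law (DASL) on a doset `D ⊆ ι × ι`
over `B`. -/
structure DASL (B : Type*) [CommRing B] (A : Type*) [CommRing A] [Algebra B A]
    (ι : Type*) [PartialOrder ι] (D : Set (ι × ι))
    (𝒜 : ℕ → Submodule B A) [GradedAlgebra 𝒜] where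
  doset_refl : ∀ a : ι, (a, a) ∈ D
  doset_le : ∀ p ∈ D, p.1 ≤ p.2
  doset_trans : ∀ a b c : ι, a ≤ b → b ≤ c →
    ((a, c) ∈ D ↔ (a, b) ∈ D ∧ (b, c) ∈ D)
  /-- `A_0 = B`. -/
  zero_eq : 𝒜 0 = 1
  /-- The doset elements inside `A`. -/
  emb : ι × ι → A
  /-- Each doset element is homogeneous of positive degree. -/
  homog : ∀ p ∈ D, ∃ d, 0 < d ∧ emb p ∈ 𝒜 d
  /-- The doset generates `A` as a `B`-algebra. -/
  generates : Algebra.adjoin B (emb '' D) = ⊤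
  /-- The standard monomials form a free `B`-module basis of `A`. -/
  bas : Module.Basis (Std D) B A
  bas_eq : ∀ l : Std D, bas l = (l.1.map emb).prod
  /-- Condition (3): each standard monomial `N` appearing in the standard
  representation of a product `M` of doset elements satisfies: every permutation of
  the flattened sequence of `M` is lexicographically ≥ the flattened sequence of `N`. -/
  lex_cond : ∀ m : List (ι × ι), (∀ p ∈ m, p ∈ D) →
    ∀ N : Std D, bas.repr ((m.map emb).prod) N ≠ 0 →
      ∀ l' : List ι, l'.Perm (flat m) → lexLE (flat N.1) l'
  /-- Condition (4): if some permutation of the factors of `M` gives a standard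
  monomial, that standard monomial appears with coefficient `±1`. -/
  coeff_cond : ∀ m : List (ι × ι), (∀ p ∈ m, p ∈ D) →
    ∀ N : Std D, (flat N.1).Perm (flat m) →
      bas.repr ((m.map emb).prod) N = 1 ∨ bas.repr ((m.map emb).prod) N = -1

theorem lexLE.head_le {ι : Type*} [PartialOrder ι] {a b : ι} {l l' : List ι}
    (h : lexLE (a :: l) (b :: l')) : a ≤ b := by
  rcases h with h | h
  · exact (List.cons_eq_cons.mp h).1.le
  · cases h with
    | cons _ => exact le_rfl
    | rel h => exact h.le

theorem List.Perm.flat {ι : Type*} {l l' : List (ι × ι)} (h : l.Perm l') :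
    (flat l).Perm (flat l') :=
  h.flatMap_right _

def Std.nil {ι : Type*} [PartialOrder ι] {D : Set (ι × ι)} : Std D :=
  ⟨[], by simp, List.IsChain.nil⟩

theorem Module.Basis.mem_span_of_repr_ne_zero {ι R M : Type*} [Semiring R] [AddCommMonoid M]
    [Module R M] (b : Module.Basis ι R M) {s : Set M} {x : M}
    (h : ∀ i, b.repr x i ≠ 0 → b i ∈ s) : x ∈ Submodule.span R s :=
  Submodule.span_mono (Set.image_subset_iff.mpr fun i hi => h i (Finsupp.mem_support_iff.mp hi))
    (b.mem_span_repr_support x)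

namespace DASL

variable {B A ι : Type*} [CommRing B] [CommRing A] [Algebra B A]
    [PartialOrder ι] {D : Set (ι × ι)} {𝒜 : ℕ → Submodule B A} [GradedAlgebra 𝒜]
    (dasl : DASL B A ι D 𝒜)

theorem exists_prod_mem_graded {m : List (ι × ι)} (hm : ∀ p ∈ m, p ∈ D) :
    ∃ d, (m ≠ [] → 0 < d) ∧ (m.map dasl.emb).prod ∈ 𝒜 d := by
  induction m with
  | nil => exact ⟨0, by simp, by simpa using SetLike.one_mem_graded 𝒜⟩
  | cons p t ih =>
    obtain ⟨d, -, hd⟩ := ih fun q hq => hm q (List.mem_cons_of_mem _ hq)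
    obtain ⟨e, he, hpe⟩ := dasl.homog p (hm p List.mem_cons_self)
    exact ⟨e + d, fun _ => by omega, by simpa using SetLike.mul_mem_graded hpe hd⟩

theorem bas_nil : dasl.bas Std.nil = 1 := by
  rw [dasl.bas_eq]
  simp [Std.nil]

theorem proj_zero_eq_repr_nil_smul_one (x : A) :
    GradedAlgebra.proj 𝒜 0 x = dasl.bas.repr x Std.nil • 1 := by
  classical
  suffices GradedAlgebra.proj 𝒜 0 =
      ((Finsupp.lapply Std.nil).comp dasl.bas.repr.toLinearMap).smulRight (1 : A) from
    LinearMap.congr_fun this x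
  refine dasl.bas.ext fun N => ?_
  simp only [LinearMap.smulRight_apply, LinearMap.comp_apply, LinearEquiv.coe_coe,
    Module.Basis.repr_self, Finsupp.lapply_apply, GradedAlgebra.proj_apply]
  by_cases hN : N = Std.nil
  · subst hN
    rw [bas_nil, Finsupp.single_eq_same, one_smul]
    exact DirectSum.decompose_of_mem_same 𝒜 (SetLike.one_mem_graded 𝒜)
  · have hne : N.1 ≠ [] := fun h => hN (Subtype.ext h)
    obtain ⟨d, hd, hNd⟩ := dasl.exists_prod_mem_graded N.2.1
    rw [Finsupp.single_eq_of_ne' hN, zero_smul, dasl.bas_eq]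
    exact DirectSum.decompose_of_mem_ne 𝒜 hNd (hd hne).ne'

theorem repr_nil_eq_zero_of_mem {x : A} {d : ℕ} (hd : d ≠ 0) (hx : x ∈ 𝒜 d) :
    dasl.bas.repr x Std.nil = 0 := by
  have h := dasl.proj_zero_eq_repr_nil_smul_one x
  rw [GradedAlgebra.proj_apply, DirectSum.decompose_of_mem_ne 𝒜 hx hd, ← dasl.bas_nil] at h
  simpa using congrArg (fun y => dasl.bas.repr y Std.nil) h.symm

theorem exists_head_fst_le_of_repr_ne_zero {m : List (ι × ι)} (hm : ∀ p ∈ m, p ∈ D)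
    {p : ι × ι} (hp : p ∈ m) {N : Std D} (hN : dasl.bas.repr (m.map dasl.emb).prod N ≠ 0) :
    ∃ q l, N.1 = q :: l ∧ q.1 ≤ p.1 := by
  classical
  obtain ⟨d, hd, hmd⟩ := dasl.exists_prod_mem_graded hm
  obtain ⟨q, l, hNql⟩ : ∃ q l, N.1 = q :: l := by
    refine List.exists_cons_of_ne_nil fun hnil => hN ?_
    rw [show N = Std.nil from Subtype.ext hnil]
    exact dasl.repr_nil_eq_zero_of_mem (hd (List.ne_nil_of_mem hp)).ne' hmd
  have hlex := dasl.lex_cond m hm N hN _ (List.perm_cons_erase hp).symm.flat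
  rw [hNql] at hlex
  exact ⟨q, l, hNql, lexLE.head_le hlex⟩

variable (I : Set (ι × ι))

def stdMonomialsWithHeadIn : Set A :=
  {x | ∃ N : Std D, ∃ p l, N.1 = p :: l ∧ p ∈ I ∧ x = (N.1.map dasl.emb).prod}

variable {I}

theorem prod_mem_span_stdMonomialsWithHeadIn (hlow : ∀ p ∈ I, ∀ q ∈ D, q.1 ≤ p.1 → q ∈ I)
    {m : List (ι × ι)} (hm : ∀ p ∈ m, p ∈ D) {p : ι × ι} (hp : p ∈ m) (hpI : p ∈ I) :
    (m.map dasl.emb).prod ∈ Submodule.span B (dasl.stdMonomialsWithHeadIn I) := by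
  refine dasl.bas.mem_span_of_repr_ne_zero fun N hN => ?_
  obtain ⟨q, l, hNql, hqp⟩ := dasl.exists_head_fst_le_of_repr_ne_zero hm hp hN
  have hqD : q ∈ D := N.2.1 q (hNql ▸ List.mem_cons_self)
  exact ⟨N, q, l, hNql, hlow p hpI q hqD hqp, dasl.bas_eq N⟩

theorem mul_mem_span_stdMonomialsWithHeadIn (hlow : ∀ p ∈ I, ∀ q ∈ D, q.1 ≤ p.1 → q ∈ I)
    (a : A) {x : A} (hx : x ∈ Submodule.span B (dasl.stdMonomialsWithHeadIn I)) :
    a * x ∈ Submodule.span B (dasl.stdMonomialsWithHeadIn I) := by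
  suffices h : (⊤ : Submodule B A) * Submodule.span B (dasl.stdMonomialsWithHeadIn I) ≤
      Submodule.span B (dasl.stdMonomialsWithHeadIn I) from
    h (Submodule.mul_mem_mul Submodule.mem_top hx)
  rw [← dasl.bas.span_eq, Submodule.span_mul_span, Submodule.span_le]
  rintro _ ⟨_, ⟨M, rfl⟩, _, ⟨N, q, l, hNql, hqI, rfl⟩, rfl⟩
  have hMN := dasl.prod_mem_span_stdMonomialsWithHeadIn hlow (m := M.1 ++ N.1) (p := q)
    (fun r hr => (List.mem_append.mp hr).elim (M.2.1 r) (N.2.1 r)) (by simp [hNql]) hqI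
  simpa [dasl.bas_eq] using hMN

end DASL

theorem stmt_4 {B A ι : Type*} [CommRing B] [CommRing A] [Algebra B A]
    [PartialOrder ι] (D : Set (ι × ι)) (𝒜 : ℕ → Submodule B A) [GradedAlgebra 𝒜]
    (dasl : DASL B A ι D 𝒜) (I : Set (ι × ι)) (hID : I ⊆ D)
    (hlow : ∀ p ∈ I, ∀ q ∈ D, q.1 ≤ p.1 → q ∈ I) :
    (Ideal.span (dasl.emb '' I)).restrictScalars B =
      Submodule.span B {x : A | ∃ N : Std D, ∃ p l',
        N.1 = p :: l' ∧ p ∈ I ∧ x = (N.1.map dasl.emb).prod} := by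
  let J : Ideal A :=
    { Submodule.span B (dasl.stdMonomialsWithHeadIn I) with
      smul_mem' := fun a _ hx => dasl.mul_mem_span_stdMonomialsWithHeadIn hlow a hx }
  refine le_antisymm (fun x hx => (Ideal.span_le (I := J)).mpr ?_ hx) (Submodule.span_le.mpr ?_)
  · rintro _ ⟨p, hpI, rfl⟩
    change _ ∈ Submodule.span B _
    simpa using dasl.prod_mem_span_stdMonomialsWithHeadIn hlow (m := [p])
      (by simpa using hID hpI) (List.mem_singleton_self p) hpI
  · rintro _ ⟨N, p, l, hNpl, hpI, rfl⟩
    rw [hNpl, List.map_cons, List.prod_cons]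
    exact Ideal.mul_mem_right _ _ (Ideal.subset_span ⟨p, hpI, rfl⟩)
end

section
/- Let n, r, R be such that r ≤ R ≤ n and let m be the sequence (1,...,r−1, R+1,...,n) if n−R+r−1 is even, or (1,...,r−1, R+1,...,n−1) if n−R+r−2 is even. Then for any even-size subset α ⊆ [n], α ≥ m in the Pfaffian poset order if and only if |α ∩ {1,...,R}| ≤ r−1. Equivalently, the order ideal of Π(Z) cogenerated by m consists exactly of the even subsets having at least r elements ≤ R. -/
/-- The `i`-th smallest element of `A` (as a natural number), defaulting to `0`. -/
def sget {n : ℕ} (A : Finset (Fin n)) (i : ℕ) : ℕ :=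
  ((A.sort (· ≤ ·)).map Fin.val).getD i 0

/-- The order on subsets of `[n]`: `A ≤ B` iff `|A| ≥ |B|` and entrywise domination. -/
def sle {n : ℕ} (A B : Finset (Fin n)) : Prop :=
  B.card ≤ A.card ∧ ∀ i < B.card, sget A i ≤ sget B i

/-!
In sorted form the cogenerator is `0, 1, …, a - 1, R, R + 1, …, R + k - 1` (with `a = r - 1`).
If `|α| > a`, entrywise domination at position `a` says that the `(a+1)`-st smallest element
of `α` is at least `R`, i.e. at most `a` elements of `α` lie below `R`. Conversely, if
`c ≤ a` elements lie below `R`, then the `(c+1)`-st smallest is `≥ R`, and strict increase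
gives `α_i ≥ R + (i - c) ≥ R + (i - a)` for `i ≥ a`, while `α_i ≥ i` for `i < a`.
The size condition `|α| ≤ a + k` of the order is automatic: `α` has at most `a` elements
below `R` and at most `n - R` above, and the parity choice of `k` is exactly what lets the
even number `|α|` fit.
-/

namespace List.SortedLT

variable {l : List ℕ}

theorem getElem_add_sub_le (hl : l.SortedLT) {i j : ℕ} (hij : i ≤ j) (hj : j < l.length) :
    l[i] + (j - i) ≤ l[j] := by
  induction j, hij using Nat.le_induction with
  | base => simp
  | succ j hij ih =>
    have hlt : l[j] < l[j + 1] := hl.getElem_lt_getElem_iff.mpr (Nat.lt_succ_self j)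
    have := ih (by omega)
    omega

theorem length_filter_lt_le_iff (hl : l.SortedLT) {R k : ℕ} (hk : k < l.length) :
    (l.filter (· < R)).length ≤ k ↔ R ≤ l[k] := by
  constructor
  · intro hlen
    by_contra! hkR
    have hprefix : (l.take (k + 1)).filter (· < R) = l.take (k + 1) := by
      refine List.filter_eq_self.mpr fun x hx => ?_
      obtain ⟨j, hj, rfl⟩ := List.mem_take_iff_getElem.mp hx
      have : l[j] ≤ l[k] := hl.getElem_le_getElem_iff.mpr (by omega)
      simp only [decide_eq_true_eq]
      omega
    have := ((List.take_sublist (k + 1) l).filter (· < R)).length_le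
    rw [hprefix, List.length_take] at this
    omega
  · intro hRk
    have hsuffix : (l.drop k).filter (· < R) = [] := by
      refine List.filter_eq_nil_iff.mpr fun x hx => ?_
      obtain ⟨j, hj, rfl⟩ := List.mem_drop_iff_getElem.mp hx
      have : l[k] ≤ l[k + j] := hl.getElem_le_getElem_iff.mpr (by omega)
      simp only [decide_eq_true_eq]
      omega
    rw [← List.take_append_drop k l, List.filter_append, hsuffix, List.append_nil]
    exact (List.length_filter_le _ _).trans (List.length_take_le _ _)

end List.SortedLT

open Finset

section SortedValues

variable {n : ℕ} (A : Finset (Fin n))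

def sortedVals : List ℕ := (A.sort (· ≤ ·)).map Fin.val

theorem sget_eq_getD (i : ℕ) : sget A i = (sortedVals A).getD i 0 := rfl

theorem length_sortedVals : (sortedVals A).length = #A := by
  simp [sortedVals]

theorem sortedLT_sortedVals : (sortedVals A).SortedLT :=
  (StrictMono.sortedLT_listMap Fin.val_strictMono).mpr (sortedLT_sort A)

theorem mem_sortedVals {x : ℕ} : x ∈ sortedVals A ↔ ∃ a ∈ A, (a : ℕ) = x := by
  simp [sortedVals]

theorem length_filter_sortedVals (R : ℕ) :
    ((sortedVals A).filter (· < R)).length = #(A.filter fun x : Fin n => (x : ℕ) < R) := by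
  rw [sortedVals, List.filter_map, List.length_map, Finset.card_def, Finset.filter_val,
    ← Finset.sort_eq A (· ≤ ·), Multiset.filter_coe, Multiset.coe_card]
  rfl

variable {A}

theorem sget_eq_getElem {i : ℕ} (hi : i < #A) :
    sget A i = (sortedVals A)[i]'((length_sortedVals A).symm ▸ hi) :=
  List.getD_eq_getElem _ _ _

theorem sget_add_sub_le {i j : ℕ} (hij : i ≤ j) (hj : j < #A) :
    sget A i + (j - i) ≤ sget A j := by
  rw [sget_eq_getElem (hij.trans_lt hj), sget_eq_getElem hj]
  exact (sortedLT_sortedVals A).getElem_add_sub_le hij _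

theorem card_filter_lt_le_iff_le_sget {R k : ℕ} (hk : k < #A) :
    #(A.filter fun x : Fin n => (x : ℕ) < R) ≤ k ↔ R ≤ sget A k := by
  rw [← length_filter_sortedVals, sget_eq_getElem hk]
  exact (sortedLT_sortedVals A).length_filter_lt_le_iff _

end SortedValues

def staircase (n a R k : ℕ) : Finset (Fin n) :=
  univ.filter fun x : Fin n => (x : ℕ) < a ∨ (R ≤ (x : ℕ) ∧ (x : ℕ) < R + k)

section Staircase

variable {n a R k : ℕ}

theorem sortedVals_staircase (haR : a ≤ R) (hRk : R + k ≤ n) :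
    sortedVals (staircase n a R k) = List.range a ++ List.range' R k := by
  have hsorted : (List.range a ++ List.range' R k).SortedLT := by
    refine (List.pairwise_append.mpr ⟨(List.sortedLT_range a).pairwise,
      (List.sortedLT_range' R k one_ne_zero).pairwise, fun x hx y hy => ?_⟩).sortedLT
    rw [List.mem_range] at hx
    rw [List.mem_range'_1] at hy
    omega
  refine (sortedLT_sortedVals _).eq_of_mem_iff hsorted fun x => ?_
  simp only [mem_sortedVals, staircase, mem_filter, mem_univ, true_and, List.mem_append,
    List.mem_range, List.mem_range'_1]
  constructor
  · rintro ⟨y, hy, rfl⟩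
    exact hy
  · intro hx
    exact ⟨⟨x, by omega⟩, hx, rfl⟩

theorem card_staircase (haR : a ≤ R) (hRk : R + k ≤ n) : #(staircase n a R k) = a + k := by
  rw [← length_sortedVals, sortedVals_staircase haR hRk, List.length_append, List.length_range,
    List.length_range']

theorem sget_staircase_of_lt (haR : a ≤ R) (hRk : R + k ≤ n) {i : ℕ} (hi : i < a) :
    sget (staircase n a R k) i = i := by
  rw [sget_eq_getD, sortedVals_staircase haR hRk,
    List.getD_append _ _ _ _ (by simpa using hi), List.getD_eq_getElem _ _ (by simpa using hi),
    List.getElem_range]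

theorem sget_staircase_of_le (haR : a ≤ R) (hRk : R + k ≤ n) {i : ℕ} (hai : a ≤ i)
    (hik : i < a + k) : sget (staircase n a R k) i = R + (i - a) := by
  rw [sget_eq_getD, sortedVals_staircase haR hRk,
    List.getD_append_right _ _ _ _ (by simpa using hai), List.length_range,
    List.getD_eq_getElem _ _ (by rw [List.length_range']; omega), List.getElem_range'_1]

theorem sle_staircase_iff (haR : a ≤ R) (hRk : R + k ≤ n) (B : Finset (Fin n)) :
    sle (staircase n a R k) B ↔
      #B ≤ a + k ∧ #(B.filter fun x : Fin n => (x : ℕ) < R) ≤ a := by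
  simp only [sle, card_staircase haR hRk]
  constructor
  · rintro ⟨hcard, hdom⟩
    refine ⟨hcard, ?_⟩
    rcases le_or_gt #B a with hBa | haB
    · exact (card_filter_le _ _).trans hBa
    · rw [card_filter_lt_le_iff_le_sget haB]
      simpa [sget_staircase_of_le haR hRk le_rfl (by omega)] using hdom a haB
  · rintro ⟨hcard, hlow⟩
    refine ⟨hcard, fun i hi => ?_⟩
    rcases lt_or_ge i a with hia | hai
    · rw [sget_staircase_of_lt haR hRk hia]
      have := sget_add_sub_le (Nat.zero_le i) hi
      omega
    · rw [sget_staircase_of_le haR hRk hai (by omega)]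
      set c := #(B.filter fun x : Fin n => (x : ℕ) < R)
      have hRc : R ≤ sget B c := (card_filter_lt_le_iff_le_sget (by omega)).mp le_rfl
      have := sget_add_sub_le (show c ≤ i by omega) hi
      omega

end Staircase

theorem card_le_card_filter_lt_add {n : ℕ} (B : Finset (Fin n)) (R : ℕ) :
    #B ≤ #(B.filter fun x : Fin n => (x : ℕ) < R) + (n - R) := by
  rw [← card_filter_add_card_filter_not (s := B) (fun x : Fin n => (x : ℕ) < R)]
  gcongr
  calc #(B.filter fun x : Fin n => ¬ (x : ℕ) < R)
      ≤ #(univ.filter fun x : Fin n => ¬ (x : ℕ) < R) :=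
        card_le_card (filter_subset_filter _ (subset_univ B))
    _ = n - R := by
      have := card_filter_add_card_filter_not (s := univ) (fun x : Fin n => (x : ℕ) < R)
      rw [card_univ, Fintype.card_fin, Fin.card_filter_val_lt] at this
      omega

/-- Let `m = (1,…,r−1, R+1,…,n)` if `n−R+r−1` is even, and `(1,…,r−1, R+1,…,n−1)`
otherwise (0-indexed: `{0,…,r−2} ∪ {R,…,n−1}` resp. `{0,…,r−2} ∪ {R,…,n−2}`).
Then for every even-cardinality `α ⊆ [n]`: `α ≥ m` iff `α` has at most `r−1`
elements among `{1,…,R}`.  Equivalently, the order ideal of `Π(Z)` cogenerated by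
`m` consists of the even subsets with at least `r` elements `≤ R`. -/
theorem stmt_17 (n r R : ℕ) (h1r : 1 ≤ r) (hrR : r ≤ R) (hRn : R ≤ n)
    (α : Finset (Fin n)) (hα : Even α.card) :
    sle (if Even (n - R + r - 1)
          then Finset.univ.filter fun x : Fin n => (x : ℕ) < r - 1 ∨ R ≤ (x : ℕ)
          else Finset.univ.filter fun x : Fin n =>
            (x : ℕ) < r - 1 ∨ (R ≤ (x : ℕ) ∧ (x : ℕ) < n - 1)) α ↔
      (α.filter fun x : Fin n => (x : ℕ) < R).card ≤ r - 1 := by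
  have hcard := card_le_card_filter_lt_add α R
  obtain ⟨t, ht⟩ := hα
  split_ifs with hpar
  · have hm : (univ.filter fun x : Fin n => (x : ℕ) < r - 1 ∨ R ≤ (x : ℕ))
        = staircase n (r - 1) R (n - R) := by
      ext x; simp only [mem_filter, mem_univ, true_and, staircase]; omega
    rw [hm, sle_staircase_iff (by omega) (by omega)]
    omega
  · obtain ⟨s, hs⟩ := Nat.not_even_iff_odd.mp hpar
    have hm :
        (univ.filter fun x : Fin n => (x : ℕ) < r - 1 ∨ (R ≤ (x : ℕ) ∧ (x : ℕ) < n - 1))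
          = staircase n (r - 1) R (n - 1 - R) := by
      ext x; simp only [mem_filter, mem_univ, true_and, staircase]; omega
    rw [hm, sle_staircase_iff (by omega) (by omega)]
    omega
end
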